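/- Let Λ = Z_p⟦X⟧, T^ord = Λ[y,z]/(y(y−p), z(z−X)), and let T^⊥ = Λ[y,z]/(y(y−p), z(z−X), (y−p)(z−X)) with J^⊥ the image of the ideal (y,z). Then T^⊥/J^⊥ ≅ Λ/(pX), and the three congruence modules at the minimal primes η₁ = (y, z−X), η₂ = (y−p, z), η₃ = (y−p, z−X) satisfy: (J^⊥+η₁)/((J^⊥)²+η₁) ≅ Z_p, (J^⊥+η₂)/((J^⊥)²+η₂) ≅ F_p⟦X⟧, and (J^⊥+η₃)/((J^⊥)²+η₃) ≅ m_Λ/m_Λ². -/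

import Mathlib

set_option synthInstance.maxHeartbeats 1000000
set_option maxHeartbeats 2000000

open IsLocalRing

/-- The one-variable Iwasawa algebra `Λ = ℤ_p⟦X⟧`. -/
abbrev Lam13 (p : ℕ) [Fact p.Prime] : Type := PowerSeries ℤ_[p]

/-- `y ∈ Λ[y,z]`. -/
noncomputable abbrev y13 (p : ℕ) [Fact p.Prime] : MvPolynomial (Fin 2) (Lam13 p) :=
  MvPolynomial.X 0

/-- `z ∈ Λ[y,z]`. -/
noncomputable abbrev z13 (p : ℕ) [Fact p.Prime] : MvPolynomial (Fin 2) (Lam13 p) :=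
  MvPolynomial.X 1

/-- The ideal `(y(y−p), z(z−X), (y−p)(z−X)) ⊆ Λ[y,z]`. -/
noncomputable def Iperp (p : ℕ) [Fact p.Prime] : Ideal (MvPolynomial (Fin 2) (Lam13 p)) :=
  Ideal.span
    {y13 p * (y13 p - MvPolynomial.C ((p : Lam13 p))),
     z13 p * (z13 p - MvPolynomial.C PowerSeries.X),
     (y13 p - MvPolynomial.C ((p : Lam13 p))) * (z13 p - MvPolynomial.C PowerSeries.X)}

/-- The ring `T^⊥ = Λ[y,z]/(y(y−p), z(z−X), (y−p)(z−X))`. -/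
abbrev Tperp (p : ℕ) [Fact p.Prime] : Type :=
  MvPolynomial (Fin 2) (Lam13 p) ⧸ Iperp p

noncomputable instance Tperp.instCommRing (p : ℕ) [Fact p.Prime] : CommRing (Tperp p) :=
  Ideal.Quotient.commRing (Iperp p)

/-- The image `J^⊥` of the ideal `(y, z)` in `T^⊥`. -/
noncomputable def Jperp (p : ℕ) [Fact p.Prime] : Ideal (Tperp p) :=
  (Ideal.span {y13 p, z13 p}).map (Ideal.Quotient.mk (Iperp p))

/-- The minimal prime `η₁ = (y, z − X)` of `T^⊥`. -/
noncomputable def eta1 (p : ℕ) [Fact p.Prime] : Ideal (Tperp p) :=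
  (Ideal.span {y13 p, z13 p - MvPolynomial.C PowerSeries.X}).map (Ideal.Quotient.mk (Iperp p))

/-- The minimal prime `η₂ = (y − p, z)` of `T^⊥`. -/
noncomputable def eta2 (p : ℕ) [Fact p.Prime] : Ideal (Tperp p) :=
  (Ideal.span {y13 p - MvPolynomial.C ((p : Lam13 p)), z13 p}).map (Ideal.Quotient.mk (Iperp p))

/-- The minimal prime `η₃ = (y − p, z − X)` of `T^⊥`. -/
noncomputable def eta3 (p : ℕ) [Fact p.Prime] : Ideal (Tperp p) :=
  (Ideal.span {y13 p - MvPolynomial.C ((p : Lam13 p)),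
    z13 p - MvPolynomial.C PowerSeries.X}).map (Ideal.Quotient.mk (Iperp p))

/-- The congruence module `(J^⊥ + η)/((J^⊥)² + η)`, realized as the image of the ideal
`J^⊥ + η` in `T^⊥/((J^⊥)² + η)`. -/
noncomputable def congrMod (p : ℕ) [Fact p.Prime] (η : Ideal (Tperp p)) :
    Ideal (Tperp p ⧸ (Jperp p ^ 2 + η)) :=
  (Jperp p + η).map (Ideal.Quotient.mk (Jperp p ^ 2 + η))

/-!
Each minimal prime `η` of `T^⊥` is the kernel of evaluating at a point `(a, b)` of the matching
component of `Spec T^⊥`: `(0, X)`, `(p, 0)` and `(p, X)`. Evaluation maps `J^⊥` onto `𝔞 = (a, b)`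
and identifies `T^⊥/((J^⊥)² + η)` with `Λ/𝔞²`, so the congruence module at `η` is the cotangent
module `𝔞/𝔞²`. For the three points this is `(X)/(X²) ≅ Λ/(X) ≅ ℤ_p`, `(p)/(p²) ≅ Λ/(p) ≅ 𝔽_p⟦X⟧`
and `m_Λ/m_Λ²`. Similarly, `T^⊥/J^⊥` is `Λ[y,z]` modulo the relations and `(y, z)`; evaluating at
the origin leaves only the image `pX` of `(y − p)(z − X)`.
-/

namespace Ideal

variable {R S : Type*} [CommRing R] [CommRing S]

def addEquivMap (e : R ≃+* S) (P : Ideal R) : P ≃+ P.map (e : R →+* S) :=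
  { (e : R ≃ S).subtypeEquiv fun _ => apply_mem_of_equiv_iff.symm with
    map_add' := fun x y => Subtype.ext (map_add e (x : R) y) }

noncomputable def quotientEquivOfKerLE (f : R →+* S) (hf : Function.Surjective f) (K : Ideal R)
    (hK : RingHom.ker f ≤ K) : R ⧸ K ≃+* S ⧸ K.map f :=
  RingEquiv.ofBijective (quotientMap _ f le_comap_map)
    ⟨quotientMap_injective' <| by
      rw [comap_map_of_surjective _ hf, ← RingHom.ker_eq_comap_bot]
      exact sup_le le_rfl hK,
    quotientMap_surjective hf⟩

noncomputable def congruenceModuleEquivCotangent (f : R →+* S) (hf : Function.Surjective f)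
    (J η : Ideal R) (hη : RingHom.ker f = η) :
    (J + η).map (Quotient.mk (J ^ 2 + η)) ≃+ (J.map f).Cotangent := by
  have hηf : η.map f = ⊥ := by rw [map_eq_bot_iff_le_ker, hη]
  have hsq : (J ^ 2 + η).map f = J.map f ^ 2 := by
    rw [add_eq_sup, map_sup, Ideal.map_pow, hηf, sup_bot_eq]
  let e := (quotientEquivOfKerLE f hf (J ^ 2 + η) (hη ▸ le_sup_right)).trans
    (quotEquivOfEq hsq)
  have hcomp : (e : R ⧸ J ^ 2 + η →+* S ⧸ J.map f ^ 2).comp (Quotient.mk (J ^ 2 + η)) =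
      (Quotient.mk _).comp f :=
    RingHom.ext fun _ => rfl
  have he : ((J + η).map (Quotient.mk (J ^ 2 + η))).map (e : R ⧸ J ^ 2 + η →+* S ⧸ J.map f ^ 2) =
      (J.map f).cotangentIdeal := by
    rw [map_map, hcomp, ← map_map, add_eq_sup, map_sup, hηf, sup_bot_eq]
    exact map_eq_submodule_map _ _
  exact (addEquivMap e _).trans <| (LinearEquiv.ofEq _ _ he).toAddEquiv.trans
    (J.map f).cotangentEquivIdeal.symm.toAddEquiv

noncomputable def cotangentSpanSingletonEquiv (x : R) (hx : IsLeftRegular x) :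
    (span {x}).Cotangent ≃ₗ[R] R ⧸ span {x} := by
  let φ : R →ₗ[R] (span {x}).Cotangent :=
    LinearMap.toSpanSingleton R _ ((span {x}).toCotangent ⟨x, mem_span_singleton_self x⟩)
  have hsurj : Function.Surjective φ := by
    intro t
    obtain ⟨⟨y, hy⟩, rfl⟩ := (span {x}).toCotangent_surjective t
    obtain ⟨r, rfl⟩ := mem_span_singleton'.mp hy
    exact ⟨r, by simp [φ, ← map_smul]⟩
  have hker : LinearMap.ker φ = span {x} := by
    ext r
    simp only [LinearMap.mem_ker, LinearMap.toSpanSingleton_apply, φ, ← map_smul,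
      toCotangent_eq_zero, span_singleton_pow, mem_span_singleton]
    rw [Submodule.coe_smul, smul_eq_mul, pow_two, mul_comm r]
    refine ⟨fun ⟨c, hc⟩ => ⟨c, hx ?_⟩, mul_dvd_mul_left x⟩
    simpa [mul_assoc] using hc
  exact ((LinearMap.quotKerEquivOfSurjective φ hsurj).symm.trans
    (Submodule.quotEquivOfEq _ _ hker))

end Ideal

namespace MvPolynomial
variable {σ R : Type*} [CommRing R]

lemma sub_C_eval_mem_span (v : σ → R) (f : MvPolynomial σ R) :
    f - C (eval v f) ∈ Ideal.span (Set.range fun i => X i - C (v i)) := by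
  induction f using MvPolynomial.induction_on with
  | C r => simp
  | add f g hf hg =>
    rw [map_add, map_add, add_sub_add_comm]
    exact add_mem hf hg
  | mul_X f i hf =>
    have hi : X i - C (v i) ∈ Ideal.span (Set.range fun i => X i - C (v i)) :=
      Ideal.subset_span ⟨i, rfl⟩
    rw [map_mul, eval_X, map_mul,
      show f * X i - C (eval v f) * C (v i) = f * (X i - C (v i)) + (f - C (eval v f)) * C (v i)
        by ring]
    exact add_mem (Ideal.mul_mem_left _ _ hi) (Ideal.mul_mem_right _ _ hf)

lemma ker_eval_eq_span (v : σ → R) :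
    RingHom.ker (eval v) = Ideal.span (Set.range fun i => X i - C (v i)) := by
  refine le_antisymm (fun f hf => ?_) (Ideal.span_le.mpr ?_)
  · simpa [(RingHom.mem_ker).mp hf] using sub_C_eval_mem_span v f
  · rintro _ ⟨i, rfl⟩
    simp

lemma eval_surjective (v : σ → R) : Function.Surjective (eval v) :=
  fun r => ⟨C r, by simp⟩

end MvPolynomial

namespace PowerSeries
variable {R S : Type*} [CommRing R] [CommRing S]

lemma ker_constantCoeff : RingHom.ker (constantCoeff (R := R)) = Ideal.span {(X : R⟦X⟧)} := by
  ext φ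
  rw [RingHom.mem_ker, Ideal.mem_span_singleton, X_dvd_iff]

noncomputable def quotientSpanXEquiv : R⟦X⟧ ⧸ Ideal.span {(X : R⟦X⟧)} ≃+* R :=
  (Ideal.quotEquivOfEq ker_constantCoeff.symm).trans
    (RingHom.quotientKerEquivOfSurjective constantCoeff_surj)

lemma C_dvd_iff_dvd_coeff (r : R) (φ : R⟦X⟧) : C r ∣ φ ↔ ∀ n, r ∣ coeff n φ := by
  refine ⟨fun ⟨ψ, hψ⟩ n => ⟨coeff n ψ, by simp [hψ]⟩, fun h => ?_⟩
  choose ψ hψ using h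
  exact ⟨mk ψ, by ext n; simp [hψ n]⟩

lemma ker_map_eq_span_C {φ : R →+* S} {a : R} (h : RingHom.ker φ = Ideal.span {a}) :
    RingHom.ker (map φ) = Ideal.span {C a} := by
  ext f
  simp_rw [RingHom.mem_ker, Ideal.mem_span_singleton, C_dvd_iff_dvd_coeff,
    ← Ideal.mem_span_singleton, ← h, RingHom.mem_ker, PowerSeries.ext_iff, coeff_map, map_zero]

noncomputable def quotientSpanCEquiv {φ : R →+* S} (hφ : Function.Surjective φ) {a : R}
    (h : RingHom.ker φ = Ideal.span {a}) : R⟦X⟧ ⧸ Ideal.span {C a} ≃+* S⟦X⟧ :=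
  (Ideal.quotEquivOfEq (ker_map_eq_span_C h).symm).trans
    (RingHom.quotientKerEquivOfSurjective (map_surjective φ hφ))

lemma maximalIdeal_eq_span_insert_X [IsLocalRing R] {s : Set R}
    (hs : maximalIdeal R = Ideal.span s) :
    maximalIdeal R⟦X⟧ = Ideal.span (insert X (C '' s)) := by
  let m := (maximalIdeal R).comap (constantCoeff (R := R))
  have hm : m.IsMaximal := Ideal.comap_isMaximal_of_surjective _ constantCoeff_surj
  rw [← IsLocalRing.eq_maximalIdeal hm]
  refine eq_span_insert_X_of_X_mem_of_span_eq (by simp [m]) ?_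
  rw [Ideal.map_comap_of_surjective _ constantCoeff_surj, hs]

end PowerSeries

section Tperp
open MvPolynomial

variable (p : ℕ) [Fact p.Prime]

lemma Iperp_le_ker_eval {a b : Lam13 p} (ha : a * (a - (p : Lam13 p)) = 0)
    (hb : b * (b - PowerSeries.X) = 0) (hab : (a - (p : Lam13 p)) * (b - PowerSeries.X) = 0) :
    Iperp p ≤ RingHom.ker (eval ![a, b]) := by
  rw [Iperp, Ideal.span_le]
  rintro _ (rfl | rfl | rfl) <;> simp [ha, hb, hab]

noncomputable def Tperp.quotJperpEquiv :
    Tperp p ⧸ Jperp p ≃+* Lam13 p ⧸ Ideal.span {(p : Lam13 p) * PowerSeries.X} := by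
  refine (DoubleQuot.quotQuotEquivQuotSup (Iperp p) (Ideal.span {y13 p, z13 p})).trans <|
    (Ideal.quotientEquivOfKerLE (eval ![0, 0]) (eval_surjective _) _ ?_).trans
      (Ideal.quotEquivOfEq ?_)
  · refine (ker_eval_eq_span _).trans_le (le_sup_of_le_right (Ideal.span_mono ?_))
    rintro _ ⟨i, rfl⟩
    fin_cases i <;> simp
  · rw [Ideal.map_sup, Iperp, Ideal.map_span, Ideal.map_span]
    simp [Set.image_insert_eq]

lemma maximalIdeal_Lam13 : maximalIdeal (Lam13 p) = Ideal.span {(p : Lam13 p), PowerSeries.X} := by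
  rw [PowerSeries.maximalIdeal_eq_span_insert_X PadicInt.maximalIdeal_eq_span_p,
    Set.image_singleton, Set.pair_comm, map_natCast]

noncomputable def Lam13.quotientSpanPEquiv :
    Lam13 p ⧸ Ideal.span {(p : Lam13 p)} ≃+* PowerSeries (ZMod p) := by
  rw [← map_natCast PowerSeries.C]
  exact PowerSeries.quotientSpanCEquiv (ZMod.ringHom_surjective PadicInt.toZMod)
    (by rw [PadicInt.ker_toZMod, PadicInt.maximalIdeal_eq_span_p])

lemma Lam13.natCast_ne_zero : (p : Lam13 p) ≠ 0 := fun hp =>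
  (Fact.out : p.Prime).ne_zero (by simpa using congrArg PowerSeries.constantCoeff hp)

variable {p} {a b : Lam13 p} (h : Iperp p ≤ RingHom.ker (eval ![a, b]))

noncomputable def Tperp.evalAt : Tperp p →+* Lam13 p :=
  Ideal.Quotient.lift _ (eval ![a, b]) fun _ hg => h hg

@[simp]
lemma Tperp.evalAt_mk (f : MvPolynomial (Fin 2) (Lam13 p)) :
    Tperp.evalAt h (Ideal.Quotient.mk (Iperp p) f) = eval ![a, b] f :=
  rfl

lemma Tperp.evalAt_surjective : Function.Surjective (Tperp.evalAt h) :=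
  Ideal.Quotient.lift_surjective_of_surjective _ _ (eval_surjective _)

lemma Tperp.ker_evalAt : RingHom.ker (Tperp.evalAt h) =
    (Ideal.span {y13 p - C a, z13 p - C b}).map (Ideal.Quotient.mk (Iperp p)) := by
  rw [Tperp.evalAt, Ideal.ker_quotient_lift, ker_eval_eq_span]
  congr 2
  ext
  simp [Fin.exists_fin_two, eq_comm]

lemma Tperp.map_Jperp_evalAt : (Jperp p).map (Tperp.evalAt h) = Ideal.span {a, b} := by
  rw [Jperp, Ideal.map_map, Ideal.map_span, Set.image_pair]
  simp

noncomputable def congrModEquivCotangent {η : Ideal (Tperp p)}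
    (hη : (Ideal.span {y13 p - C a, z13 p - C b}).map (Ideal.Quotient.mk (Iperp p)) = η) :
    congrMod p η ≃+ (Ideal.span {a, b}).Cotangent := by
  rw [← Tperp.map_Jperp_evalAt h]
  exact Ideal.congruenceModuleEquivCotangent _ (Tperp.evalAt_surjective h) _ _
    ((Tperp.ker_evalAt h).trans hη)

end Tperp

/-- For `T^⊥ = Λ[y,z]/(y(y−p), z(z−X), (y−p)(z−X))` and `J^⊥` the image of
`(y, z)`: `T^⊥/J^⊥ ≅ Λ/(pX)`, and the congruence modules at the three minimal primes
`η₁ = (y, z−X)`, `η₂ = (y−p, z)`, `η₃ = (y−p, z−X)` satisfy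
`(J^⊥+η₁)/((J^⊥)²+η₁) ≅ ℤ_p`, `(J^⊥+η₂)/((J^⊥)²+η₂) ≅ 𝔽_p⟦X⟧`, and
`(J^⊥+η₃)/((J^⊥)²+η₃) ≅ m_Λ/m_Λ²`. -/
theorem Tperp_congruence_modules (p : ℕ) [Fact p.Prime] :
    Nonempty ((Tperp p ⧸ Jperp p) ≃+* (Lam13 p ⧸
      Ideal.span {(p : Lam13 p) * PowerSeries.X})) ∧
    Nonempty (↥(congrMod p (eta1 p)) ≃+ ℤ_[p]) ∧
    Nonempty (↥(congrMod p (eta2 p)) ≃+ PowerSeries (ZMod p)) ∧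
    Nonempty (↥(congrMod p (eta3 p)) ≃+ (maximalIdeal (Lam13 p)).Cotangent) := by
  have hX : IsLeftRegular (PowerSeries.X : Lam13 p) :=
    (IsRegular.of_ne_zero PowerSeries.X_ne_zero).left
  have hp : IsLeftRegular (p : Lam13 p) := (IsRegular.of_ne_zero (Lam13.natCast_ne_zero p)).left
  refine ⟨⟨Tperp.quotJperpEquiv p⟩, ?_, ?_, ?_⟩
  · have e := congrModEquivCotangent (Iperp_le_ker_eval p (a := 0) (b := PowerSeries.X)
      (by simp) (by simp) (by simp)) (η := eta1 p) (by simp [eta1])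
    rw [Ideal.span_insert_zero] at e
    exact ⟨e.trans ((Ideal.cotangentSpanSingletonEquiv _ hX).toAddEquiv.trans
      PowerSeries.quotientSpanXEquiv.toAddEquiv)⟩
  · have e := congrModEquivCotangent (Iperp_le_ker_eval p (a := p) (b := 0)
      (by simp) (by simp) (by simp)) (η := eta2 p) (by simp [eta2])
    rw [Set.pair_comm, Ideal.span_insert_zero] at e
    exact ⟨e.trans ((Ideal.cotangentSpanSingletonEquiv _ hp).toAddEquiv.trans
      (Lam13.quotientSpanPEquiv p).toAddEquiv)⟩
  · rw [maximalIdeal_Lam13]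
    exact ⟨congrModEquivCotangent (Iperp_le_ker_eval p (a := p) (b := PowerSeries.X)
      (by simp) (by simp) (by simp)) (by rfl)⟩
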